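/- arXiv:1708.06169 — 4 statements merged into one kernel-verified Lean document; each statement's English description precedes it below -/
import Mathlib

section
/- Let L be a finitely generated free abelian group with a non-degenerate integer-valued symmetric bilinear form, and let f be an isometry of L ⊗ ℚ (preserving the ℚ-extension of the form and mapping L ⊗ ℚ to itself bijectively) whose characteristic polynomial has integer coefficients. Then there exists a positive integer n such that f^n maps L into L (i.e., f^n restricts to an isometry of L). -/
open Polynomial

/-- Denominator-clearing: every vector in the rational span of `L` has an
integer multiple in `L`. -/
lemma exists_int_smul_mem_lattice {V : Type*} [AddCommGroup V] [Module ℚ V]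
    (L : Submodule ℤ V) (hLspan : Submodule.span ℚ (L : Set V) = ⊤) (v : V) :
    ∃ k : ℤ, 0 < k ∧ k • v ∈ L := by
  have hv : v ∈ Submodule.span ℚ (L : Set V) := by rw [hLspan]; trivial
  induction hv using Submodule.span_induction with
  | mem x hx => exact ⟨1, one_pos, by simpa using hx⟩
  | zero => exact ⟨1, one_pos, by simp⟩
  | add x y hx hy ihx ihy =>
      obtain ⟨k1, hk1, hk1m⟩ := ihx
      obtain ⟨k2, hk2, hk2m⟩ := ihy
      refine ⟨k1 * k2, mul_pos hk1 hk2, ?_⟩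
      rw [smul_add]
      exact Submodule.add_mem L
        (by rw [mul_comm, mul_smul]; exact Submodule.smul_mem L k2 hk1m)
        (by rw [mul_smul]; exact Submodule.smul_mem L k1 hk2m)
  | smul q x hx ih =>
      obtain ⟨k, hk, hkm⟩ := ih
      refine ⟨(q.den : ℤ) * k, mul_pos (by exact_mod_cast q.pos) hk, ?_⟩
      have key : ((q.den : ℤ) * k) • q • x = q.num • (k • x) := by
        rw [← Int.cast_smul_eq_zsmul ℚ ((q.den : ℤ) * k), ← Int.cast_smul_eq_zsmul ℚ q.num,
          ← Int.cast_smul_eq_zsmul ℚ k, smul_smul, smul_smul]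
        congr 1
        push_cast
        rw [mul_comm (q.den : ℚ) (k : ℚ), mul_assoc, Rat.den_mul_eq_num, mul_comm]
      rw [key]
      exact Submodule.smul_mem L q.num hkm

/-- If `L` is a full lattice in a rational quadratic space `(V, B)` with
integer-valued form, and `f` is a rational isometry of `V` whose characteristic polynomial
has integer coefficients, then some positive power of `f` maps `L` into `L`. -/
theorem power_of_rational_isometry_preserves_lattice
    (V : Type*) [AddCommGroup V] [Module ℚ V] [FiniteDimensional ℚ V]
    (B : V →ₗ[ℚ] V →ₗ[ℚ] ℚ)
    (hsymm : ∀ x y, B x y = B y x)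
    (hnd : ∀ x : V, (∀ y : V, B x y = 0) → x = 0)
    (L : Submodule ℤ V) (hLfg : L.FG)
    (hLspan : Submodule.span ℚ (L : Set V) = ⊤)
    (hLint : ∀ x ∈ L, ∀ y ∈ L, ∃ n : ℤ, B x y = (n : ℚ))
    (f : V ≃ₗ[ℚ] V)
    (hf : ∀ x y, B (f x) (f y) = B x y)
    (hchar : ∃ p : Polynomial ℤ, p.map (Int.castRingHom ℚ) =
      LinearMap.charpoly (f : V →ₗ[ℚ] V)) :
    ∃ n : ℕ, 0 < n ∧ ∀ x ∈ L, (f ^ n) x ∈ L := by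
  classical
  obtain ⟨p, hp⟩ := hchar
  set g : V →ₗ[ℚ] V := (f : V →ₗ[ℚ] V) with hg
  set d : ℕ := Module.finrank ℚ V with hd
  -- trivial case
  by_cases hd0 : d = 0
  · have : Subsingleton V := by
      rw [← Module.finrank_zero_iff (R := ℚ) (M := V)]; exact hd0
    exact ⟨1, one_pos, fun x hx => by
      have : (f ^ 1) x = x := Subsingleton.elim _ _
      rw [this]; exact hx⟩
  have hdpos : 0 < d := Nat.pos_of_ne_zero hd0
  -- the determinant of g is ±1, hence p.coeff 0 squares to 1
  have hdet2 : LinearMap.det g ^ 2 = 1 := by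
    set c := Module.finBasis ℚ V with hc
    have hcomp : LinearMap.BilinForm.comp B g g = B := by
      apply LinearMap.ext; intro x; apply LinearMap.ext; intro y
      simpa [LinearMap.BilinForm.comp_apply, hg] using hf x y
    have hmat := BilinForm.toMatrix_comp c c B g g
    rw [hcomp] at hmat
    have hndM : (LinearMap.BilinForm.toMatrix c B).det ≠ 0 :=
      (LinearMap.BilinForm.nondegenerate_iff_det_ne_zero c).mp
        ⟨hnd, fun y h => hnd y (fun x => by rw [hsymm]; exact h x)⟩
    have hdets := congrArg Matrix.det hmat
    rw [Matrix.det_mul, Matrix.det_mul, Matrix.det_transpose] at hdets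
    have hF2 : (LinearMap.toMatrix c c g).det ^ 2 = 1 :=
      mul_left_cancel₀ hndM (by linear_combination -hdets)
    rw [← LinearMap.det_toMatrix c g]
    exact hF2
  have hc0 : p.coeff 0 ^ 2 = 1 := by
    have hds := LinearMap.det_eq_sign_charpoly_coeff g
    have hcc : (LinearMap.charpoly g).coeff 0 = ((p.coeff 0 : ℤ) : ℚ) := by
      rw [← hp, Polynomial.coeff_map]; rfl
    have : ((p.coeff 0 : ℤ) : ℚ) ^ 2 = 1 := by
      have := hdet2
      rw [hds, hcc, mul_pow, ← pow_mul, mul_comm d 2, pow_mul] at this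
      simpa using this
    exact_mod_cast this
  -- p is monic of degree d, and aeval g p = 0 over ℤ
  have hinj : Function.Injective (Int.castRingHom ℚ) := fun a b h => Int.cast_injective h
  have hpmonic : p.Monic := by
    have hm : (p.map (Int.castRingHom ℚ)).Monic := by
      rw [hp]; exact g.charpoly_monic
    exact hinj.monic_map_iff.mpr hm
  have hpdeg : p.natDegree = d := by
    rw [← Polynomial.natDegree_map_eq_of_injective hinj p, hp]
    exact LinearMap.charpoly_natDegree g
  have haeval : Polynomial.aeval g p = 0 := by
    have h0 := LinearMap.aeval_self_charpoly g
    rw [← hp, ← algebraMap_int_eq, Polynomial.aeval_map_algebraMap] at h0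
    exact h0
  -- Set up the lattice N = ℤ[g]·L
  obtain ⟨T, hT⟩ := hLfg
  set S : Set V := ⋃ i ∈ Finset.range d, (g ^ i) '' (T : Set V) with hSdef
  have hSfin : S.Finite :=
    Set.Finite.biUnion (Finset.range d).finite_toSet
      (fun i _ => ((T : Set V).toFinite.image _))
  set N : Submodule ℤ V := Submodule.span ℤ S with hNdef
  have hgen : ∀ i < d, ∀ t ∈ T, (g ^ i) t ∈ N := by
    intro i hi t ht
    exact Submodule.subset_span
      (Set.mem_iUnion₂.mpr ⟨i, Finset.mem_range.mpr hi, ⟨t, ht, rfl⟩⟩)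
  have hLN : L ≤ N := by
    rw [← hT]
    refine Submodule.span_le.mpr fun t ht => ?_
    simpa using hgen 0 hdpos t ht
  -- the tail of p
  set r : Polynomial ℤ := p - X ^ d with hrdef
  have hrdeg : r.natDegree < d := by
    rcases eq_or_ne r 0 with h0 | h0
    · rw [h0]; simpa using hdpos
    · have hdeg : r.degree < (d : WithBot ℕ) := by
        have h1 : p.degree = ((X : Polynomial ℤ) ^ d).degree := by
          rw [Polynomial.degree_X_pow, Polynomial.degree_eq_natDegree hpmonic.ne_zero, hpdeg]
        have h2 : p.leadingCoeff = ((X : Polynomial ℤ) ^ d).leadingCoeff := by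
          rw [Polynomial.leadingCoeff_X_pow, hpmonic.leadingCoeff]
        have := Polynomial.degree_sub_lt h1 hpmonic.ne_zero h2
        rw [← hrdef] at this
        calc r.degree < p.degree := this
        _ = (d : WithBot ℕ) := by
          rw [Polynomial.degree_eq_natDegree hpmonic.ne_zero, hpdeg]
      exact (Polynomial.natDegree_lt_iff_degree_lt h0).mpr hdeg
  have hXd : g ^ d = - Polynomial.aeval g r := by
    have hpsplit : p = X ^ d + r := by rw [hrdef]; ring
    have : Polynomial.aeval g (X ^ d + r) = 0 := by rw [← hpsplit]; exact haeval
    rw [map_add, map_pow, Polynomial.aeval_X] at this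
    exact eq_neg_of_add_eq_zero_left this
  -- N is stable under g
  have haux : ∀ q : Polynomial ℤ, q.natDegree < d → ∀ t ∈ T, (Polynomial.aeval g q) t ∈ N := by
    intro q hq t ht
    rw [Polynomial.aeval_eq_sum_range' hq]
    rw [LinearMap.sum_apply]
    refine Submodule.sum_mem N fun i hi => ?_
    rw [LinearMap.smul_apply]
    exact Submodule.smul_mem N _ (hgen i (Finset.mem_range.mp hi) t ht)
  have hNg : ∀ x ∈ N, g x ∈ N := by
    intro x hx
    induction hx using Submodule.span_induction with
    | mem y hy =>
        rw [hSdef] at hy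
        simp only [Set.mem_iUnion, Finset.mem_range, Set.mem_image] at hy
        obtain ⟨i, hi, t, ht, rfl⟩ := hy
        have hstep : g ((g ^ i) t) = (g ^ (i + 1)) t := by
          rw [pow_succ', Module.End.mul_apply]
        rw [hstep]
        by_cases hlt : i + 1 < d
        · exact hgen (i + 1) hlt t ht
        · have hieq : i + 1 = d := by omega
          rw [hieq, hXd, LinearMap.neg_apply]
          exact Submodule.neg_mem N (haux r hrdeg t ht)
    | zero => simpa using Submodule.zero_mem N
    | add y z _ _ ihy ihz => rw [map_add]; exact Submodule.add_mem N ihy ihz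
    | smul a y _ ih => rw [map_zsmul]; exact Submodule.smul_mem N a ih
  have hNpow : ∀ (i : ℕ), ∀ x ∈ N, (g ^ i) x ∈ N := by
    intro i
    induction i with
    | zero => intro x hx; simpa using hx
    | succ i ih =>
        intro x hx
        rw [pow_succ, Module.End.mul_apply]
        exact ih _ (hNg x hx)
  have hNaeval : ∀ q : Polynomial ℤ, ∀ x ∈ N, (Polynomial.aeval g q) x ∈ N := by
    intro q x hx
    rw [Polynomial.aeval_eq_sum_range, LinearMap.sum_apply]
    refine Submodule.sum_mem N fun i _ => ?_
    rw [LinearMap.smul_apply]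
    exact Submodule.smul_mem N _ (hNpow i x hx)
  -- inverse of g as an integer polynomial in g
  set c0 : ℤ := p.coeff 0 with hc0def
  set q' : Polynomial ℤ := -(Polynomial.C c0) * p.divX with hq'def
  have hpoly : (X : Polynomial ℤ) * q' = -(Polynomial.C c0) * p + 1 := by
    have h1 := Polynomial.X_mul_divX_add p
    have hCc0 : (Polynomial.C c0) * (Polynomial.C c0) = 1 := by
      rw [← Polynomial.C_mul, ← sq, hc0, Polynomial.C_1]
    rw [hq'def]
    linear_combination (-(Polynomial.C c0)) * h1 + hCc0
  have hginv : g * Polynomial.aeval g q' = 1 := by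
    have h2 := congrArg (Polynomial.aeval g) hpoly
    rw [map_mul, Polynomial.aeval_X] at h2
    rw [h2, map_add, map_mul, haeval, mul_zero, zero_add, map_one]
  -- the restriction of g to N
  have hNfg : N.FG := ⟨hSfin.toFinset, by rw [Set.Finite.coe_toFinset]⟩
  let ψ : N →ₗ[ℤ] N := (g.restrictScalars ℤ).restrict hNg
  have hψval : ∀ z : N, (ψ z : V) = g (z : V) := fun z => rfl
  have hψinj : Function.Injective ψ := by
    intro a b h
    have : g (a : V) = g (b : V) := by rw [← hψval, ← hψval, h]
    exact Subtype.ext (f.injective this)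
  have hψsurj : Function.Surjective ψ := by
    intro y
    refine ⟨⟨Polynomial.aeval g q' (y : V), hNaeval q' _ y.2⟩, ?_⟩
    apply Subtype.ext
    rw [hψval]
    have := congrArg (fun h : V →ₗ[ℚ] V => h (y : V)) hginv
    simpa [Module.End.mul_apply] using this
  haveI : Module.Finite ℤ N := Module.Finite.iff_fg.mpr hNfg
  haveI : NoZeroSMulDivisors ℤ V := by
    constructor
    intro n v h
    rcases eq_or_ne n 0 with rfl | hn
    · exact Or.inl rfl
    · refine Or.inr ?_
      have h1 : ((n : ℚ)) • v = 0 := by rw [Int.cast_smul_eq_zsmul]; exact h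
      rcases smul_eq_zero.mp h1 with h2 | h2
      · exact absurd (by exact_mod_cast h2) hn
      · exact h2
  -- choose a denominator k with k • N ⊆ L
  obtain ⟨s, hs⟩ := hNfg
  have hden := fun v : V => exists_int_smul_mem_lattice L hLspan v
  choose kf hkfpos hkfmem using hden
  set k : ℤ := ∏ v ∈ s, kf v with hkdef
  have hkpos : 0 < k := Finset.prod_pos fun v _ => hkfpos v
  have hkN : ∀ y ∈ N, k • y ∈ L := by
    intro y hy
    rw [← hs] at hy
    induction hy using Submodule.span_induction with
    | mem v hv =>
        obtain ⟨m, hm⟩ := Finset.dvd_prod_of_mem kf hv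
        rw [hkdef] at *
        rw [hm, mul_comm, mul_smul]
        exact Submodule.smul_mem L m (hkfmem v)
    | zero => simpa using Submodule.zero_mem L
    | add y z _ _ ihy ihz => rw [smul_add]; exact Submodule.add_mem L ihy ihz
    | smul a y _ ih => rw [smul_comm]; exact Submodule.smul_mem L a ih
  -- pass to matrices over ℤ and reduce mod k
  let ι := Module.Free.ChooseBasisIndex ℤ N
  let b : Module.Basis ι ℤ N := Module.Free.chooseBasis ℤ N
  set A : Matrix ι ι ℤ := LinearMap.toMatrix b b ψ with hAdef
  have hdetA : IsUnit A.det := by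
    rw [hAdef, LinearMap.det_toMatrix]
    have : LinearMap.det ((LinearEquiv.ofBijective ψ ⟨hψinj, hψsurj⟩ : N ≃ₗ[ℤ] N) :
        N →ₗ[ℤ] N) = LinearMap.det ψ := rfl
    rw [← this]
    exact LinearEquiv.isUnit_det' _
  set kn : ℕ := k.toNat with hkndef
  have hknk : (kn : ℤ) = k := Int.toNat_of_nonneg hkpos.le
  haveI : NeZero kn := ⟨by omega⟩
  set Abar : Matrix ι ι (ZMod kn) := A.map (Int.cast : ℤ → ZMod kn) with hAbardef
  have hφ : (Int.castRingHom (ZMod kn)).mapMatrix A = Abar := rfl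
  have hAbarUnit : IsUnit Abar := by
    rw [Matrix.isUnit_iff_isUnit_det]
    have hdet : Abar.det = ((Int.castRingHom (ZMod kn)) A.det) :=
      ((Int.castRingHom (ZMod kn)).map_det A).symm
    rw [hdet]
    exact hdetA.map _
  obtain ⟨u, hu⟩ := hAbarUnit
  set n : ℕ := orderOf u with hndef
  have hnpos : 0 < n := orderOf_pos u
  have hAbarn : Abar ^ n = 1 := by
    rw [← hu, ← Units.val_pow_eq_pow_val, pow_orderOf_eq_one, Units.val_one]
  have hdvd : ∀ i j : ι, k ∣ (A ^ n - 1) i j := by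
    intro i j
    have h3 : (Int.castRingHom (ZMod kn)).mapMatrix (A ^ n - 1) = 0 := by
      rw [map_sub, map_pow, hφ, hAbarn, map_one, sub_self]
    have h4 : (((A ^ n - 1) i j : ℤ) : ZMod kn) = 0 := by
      have := congrArg (fun M : Matrix ι ι (ZMod kn) => M i j) h3
      simpa [RingHom.mapMatrix_apply, Matrix.map_apply] using this
    rw [← hknk]
    exact (ZMod.intCast_zmod_eq_zero_iff_dvd _ _).mp h4
  -- ψ ^ n is congruent to the identity mod k
  have hmod : ∀ x : N, ∃ y : N, (ψ ^ n) x = x + k • y := by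
    have hA : LinearMap.toMatrix b b (ψ ^ n) = A ^ n := by
      rw [hAdef]
      induction n with
      | zero => simp
      | succ m ih => rw [pow_succ, pow_succ, LinearMap.toMatrix_mul, ih]
    have hb : ∀ i : ι, ∃ y : N, (ψ ^ n) (b i) = b i + k • y := by
      intro i
      refine ⟨∑ j, (((A ^ n - 1) j i) / k) • b j, ?_⟩
      have hexp : (ψ ^ n) (b i) = ∑ j, (A ^ n) j i • b j := by
        conv_lhs => rw [← Module.Basis.sum_repr b ((ψ ^ n) (b i))]
        refine Finset.sum_congr rfl fun j _ => ?_
        congr 1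
        rw [← hA, LinearMap.toMatrix_apply]
      have hsum1 : ∑ j, ((1 : Matrix ι ι ℤ) j i) • b j = b i := by
        simp [Matrix.one_apply]
      rw [hexp, Finset.smul_sum]
      have hterm : ∀ j ∈ Finset.univ, k • ((((A ^ n - 1) j i) / k) • b j)
          = (A ^ n) j i • b j - ((1 : Matrix ι ι ℤ) j i) • b j := by
        intro j _
        rw [smul_smul, Int.mul_ediv_cancel' (hdvd j i), Matrix.sub_apply, sub_smul]
      rw [Finset.sum_congr rfl hterm, Finset.sum_sub_distrib, hsum1]
      abel
    intro x
    have hx : x ∈ Submodule.span ℤ (Set.range b) := by rw [b.span_eq]; trivial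
    induction hx using Submodule.span_induction with
    | mem y hy => obtain ⟨i, rfl⟩ := hy; exact hb i
    | zero => exact ⟨0, by simp⟩
    | add y z _ _ ihy ihz =>
        obtain ⟨y1, h1⟩ := ihy; obtain ⟨z1, h2⟩ := ihz
        exact ⟨y1 + z1, by rw [map_add, h1, h2, smul_add]; abel⟩
    | smul a y _ ih =>
        obtain ⟨y1, h1⟩ := ih
        exact ⟨a • y1, by rw [map_smul, h1, smul_add, smul_comm]⟩
  -- conclude
  refine ⟨n, hnpos, fun x hx => ?_⟩
  have hxN : x ∈ N := hLN hx
  obtain ⟨y, hy⟩ := hmod ⟨x, hxN⟩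
  have hcoe : ∀ (m : ℕ) (z : N), (((ψ ^ m) z : N) : V) = (g ^ m) (z : V) := by
    intro m
    induction m with
    | zero => intro z; simp
    | succ m ih =>
        intro z
        rw [pow_succ, pow_succ, Module.End.mul_apply, Module.End.mul_apply, ih, hψval]
  have hfx : (f ^ n) x = (g ^ n) x := by
    rw [LinearEquiv.pow_apply, Module.End.pow_apply]
    rfl
  have hval : (g ^ n) x = x + k • ((y : N) : V) := by
    have := congrArg (Subtype.val : N → V) hy
    rw [hcoe n ⟨x, hxN⟩] at this
    simpa using this
  rw [hfx, hval]
  exact Submodule.add_mem L hx (hkN _ y.2)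
end

section
/- Let L be an even lattice (i.e., ⟨x,x⟩ ∈ 2ℤ for all x ∈ L), let f be an isometry of L, and let a ∈ ℤ[f + f⁻¹] (a polynomial in f + f⁻¹ with integer coefficients, viewed as an endomorphism of L). Then the twisted bilinear form ⟨x,y⟩_a := ⟨a(x), y⟩ is symmetric, and the twisted lattice L(a) is again even. -/
/-- For an even lattice `(L, B)` with isometry `f` and
`a = p(f + f⁻¹) ∈ ℤ[f + f⁻¹]`, the twisted form `⟨x,y⟩_a = ⟨a x, y⟩` is symmetric
and the twisted lattice `L(a)` is again even. -/
theorem twist_symmetric_and_even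
    (L : Type*) [AddCommGroup L]
    (B : L →ₗ[ℤ] L →ₗ[ℤ] ℤ)
    (hsymm : ∀ x y, B x y = B y x)
    (hnd : ∀ x : L, (∀ y : L, B x y = 0) → x = 0)
    (heven : ∀ x, 2 ∣ B x x)
    (f : L ≃ₗ[ℤ] L) (hf : ∀ x y, B (f x) (f y) = B x y)
    (p : Polynomial ℤ)
    (a : Module.End ℤ L)
    (ha : a = Polynomial.aeval ((f : Module.End ℤ L) + (f.symm : Module.End ℤ L)) p) :
    (∀ x y, B (a x) y = B (a y) x) ∧ (∀ x, 2 ∣ B (a x) x) := by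
  set s : Module.End ℤ L := (f : Module.End ℤ L) + (f.symm : Module.End ℤ L) with hs
  -- adjoint relations for f and f.symm
  have hfs : ∀ x y, B (f x) y = B x (f.symm y) := by
    intro x y
    have := hf x (f.symm y)
    simpa using this
  have hfs' : ∀ x y, B (f.symm x) y = B x (f y) := by
    intro x y
    have := hf (f.symm x) y
    simpa using this.symm
  -- s is self-adjoint
  have hsadj : ∀ x y, B (s x) y = B x (s y) := by
    intro x y
    have h1 : s x = f x + f.symm x := rfl
    have h2 : s y = f y + f.symm y := rfl
    rw [h1, h2, map_add, LinearMap.add_apply, map_add, hfs, hfs', add_comm]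
  -- powers of s are self-adjoint
  have hpow : ∀ n : ℕ, ∀ x y, B ((s ^ n) x) y = B x ((s ^ n) y) := by
    intro n
    induction n with
    | zero => intro x y; simp
    | succ n ih =>
      intro x y
      have e1 : (s ^ (n + 1)) x = (s ^ n) (s x) := by
        rw [pow_succ]; rfl
      have e2 : (s ^ (n + 1)) y = s ((s ^ n) y) := by
        rw [pow_succ']; rfl
      rw [e1, e2, ih, hsadj]
  -- every polynomial in s is self-adjoint
  have hadj : ∀ q : Polynomial ℤ, ∀ x y,
      B ((Polynomial.aeval s q) x) y = B x ((Polynomial.aeval s q) y) := by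
    intro q
    induction q using Polynomial.induction_on' with
    | add r t hr ht =>
      intro x y
      simp only [map_add, LinearMap.add_apply]
      rw [hr, ht]
    | monomial n c =>
      intro x y
      simp only [Polynomial.aeval_monomial]
      have : ((algebraMap ℤ (Module.End ℤ L)) c * s ^ n) = c • (s ^ n) := by
        rw [Algebra.algebraMap_eq_smul_one, smul_mul_assoc, one_mul]
      rw [this]
      simp only [LinearMap.smul_apply, map_smul, LinearMap.smul_apply]
      rw [hpow]
  -- f commutes with s, hence with polynomials in s
  have hcs : Commute (f : Module.End ℤ L) s := by
    show (f : Module.End ℤ L) * s = s * (f : Module.End ℤ L)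
    ext x
    simp [Module.End.mul_apply, hs, map_add]
  have hcomm : ∀ q : Polynomial ℤ,
      Commute (f : Module.End ℤ L) (Polynomial.aeval s q) := by
    intro q
    induction q using Polynomial.induction_on' with
    | add r t hr ht => rw [map_add]; exact hr.add_right ht
    | monomial n c =>
      simp only [Polynomial.aeval_monomial]
      exact ((Algebra.commute_algebraMap_left c (f : Module.End ℤ L)).symm).mul_right (hcs.pow_right n)
  constructor
  · intro x y
    rw [ha, hadj, hsymm]
  · intro x
    set b : Module.End ℤ L := Polynomial.aeval s p.divX with hb
    set c : ℤ := p.coeff 0 with hc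
    have hadjb : ∀ x y, B (b x) y = B x (b y) := hadj p.divX
    have hbf : b * (f : Module.End ℤ L) = (f : Module.End ℤ L) * b :=
      (hcomm p.divX).eq.symm
    have hdecomp : a = b * s + (algebraMap ℤ (Module.End ℤ L)) c := by
      rw [ha, ← Polynomial.divX_mul_X_add p]
      simp [map_mul, map_add, Polynomial.aeval_X, Polynomial.aeval_C, hb, hc,
        Polynomial.divX_mul_X_add]
    have key : a x = b (s x) + c • x := by
      rw [hdecomp]
      simp [Module.End.mul_apply, Algebra.algebraMap_eq_smul_one]
    rw [key, map_add, LinearMap.add_apply, map_smul, LinearMap.smul_apply]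
    have hbfx : b (f x) = f (b x) := by
      calc b (f x) = (b * (f : Module.End ℤ L)) x := rfl
        _ = ((f : Module.End ℤ L) * b) x := by rw [hbf]
        _ = f (b x) := rfl
    have t1 : B (f x) (b x) = B x (f (b x)) := by
      rw [← hadjb (f x) x, hbfx]
      exact hsymm _ _
    have t2 : B (f.symm x) (b x) = B x (f (b x)) := hfs' x (b x)
    have h1 : B (b (s x)) x = 2 * B x (f (b x)) := by
      have e1 : s x = f x + f.symm x := rfl
      calc B (b (s x)) x = B (s x) (b x) := hadjb (s x) x
        _ = B (f x) (b x) + B (f.symm x) (b x) := by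
              rw [e1, map_add, LinearMap.add_apply]
        _ = B x (f (b x)) + B x (f (b x)) := by rw [t1, t2]
        _ = 2 * B x (f (b x)) := by ring
    rw [h1]
    exact dvd_add ⟨_, rfl⟩ (Dvd.dvd.mul_left (heven x) c)
end

section
/- Let L be a unimodular even lattice, M ⊆ L a primitive sublattice, and N = M^⊥ its orthogonal complement. Then N is primitive in L, and there is an isomorphism φ: D_M → D_N of discriminant groups satisfying q_N(φ(x)) = -q_M(x) for all x ∈ D_M. -/
def dualLattice (V : Type*) [AddCommGroup V] [Module ℚ V]
    (B : V →ₗ[ℚ] V →ₗ[ℚ] ℚ) (A : Submodule ℤ V) : Submodule ℤ V where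
  carrier := {x | ∀ a ∈ A, ∃ n : ℤ, B x a = (n : ℚ)}
  zero_mem' := by
    intro a _
    exact ⟨0, by simp⟩
  add_mem' := by
    intro x y hx hy a ha
    obtain ⟨n, hn⟩ := hx a ha
    obtain ⟨m, hm⟩ := hy a ha
    exact ⟨n + m, by rw [map_add, LinearMap.add_apply, hn, hm]; push_cast; ring⟩
  smul_mem' := by
    intro c x hx a ha
    obtain ⟨n, hn⟩ := hx a ha
    refine ⟨c * n, ?_⟩
    rw [map_zsmul, LinearMap.smul_apply, hn, zsmul_eq_mul]
    push_cast
    ring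

section NikAux
variable {V : Type*} [AddCommGroup V] [Module ℚ V]

lemma nik_mem_dualLattice (B : V →ₗ[ℚ] V →ₗ[ℚ] ℚ) (A : Submodule ℤ V) (x : V) :
    x ∈ dualLattice V B A ↔ ∀ a ∈ A, ∃ n : ℤ, B x a = (n : ℚ) := Iff.rfl

lemma nik_clear_denom (A : Submodule ℤ V) (v : V) (hv : v ∈ Submodule.span ℚ (A : Set V)) :
    ∃ c : ℤ, c ≠ 0 ∧ c • v ∈ A := by
  induction hv using Submodule.span_induction with
  | mem x hx => exact ⟨1, one_ne_zero, by simpa using hx⟩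
  | zero => exact ⟨1, one_ne_zero, by simp⟩
  | add x y _ _ hx hy =>
      obtain ⟨c, hc, hcx⟩ := hx; obtain ⟨d, hd, hdy⟩ := hy
      refine ⟨c * d, mul_ne_zero hc hd, ?_⟩
      have h : (c * d) • (x + y) = d • (c • x) + c • (d • y) := by
        rw [smul_add, smul_smul, smul_smul, mul_comm d c]
      rw [h]; exact A.add_mem (A.smul_mem _ hcx) (A.smul_mem _ hdy)
  | smul q x _ hx =>
      obtain ⟨c, hc, hcx⟩ := hx
      refine ⟨(q.den : ℤ) * c, mul_ne_zero (by exact_mod_cast q.den_ne_zero) hc, ?_⟩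
      have h : ((q.den : ℤ) * c) • (q • x) = q.num • (c • x) := by
        rw [← Int.cast_smul_eq_zsmul ℚ, ← Int.cast_smul_eq_zsmul ℚ q.num,
          ← Int.cast_smul_eq_zsmul ℚ c, smul_smul, smul_smul]
        congr 1
        push_cast
        rw [mul_comm (q.den : ℚ) (c : ℚ), mul_assoc, mul_comm ((q.den : ℚ)) q,
          Rat.mul_den_eq_num, mul_comm]
      rw [h]; exact A.smul_mem _ hcx

lemma nik_exists_lift [FiniteDimensional ℚ V] (B : V →ₗ[ℚ] V →ₗ[ℚ] ℚ)
    (hsymm : ∀ x y, B x y = B y x)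
    (hnd : ∀ x : V, (∀ y : V, B x y = 0) → x = 0)
    (L : Submodule ℤ V) (hLfg : L.FG)
    (hLspan : Submodule.span ℚ (L : Set V) = ⊤)
    (hLuni : dualLattice V B L = L)
    (A : Submodule ℤ V) (hAL : A ≤ L)
    (hAprim : ∀ x ∈ L, ∀ c : ℤ, c ≠ 0 → c • x ∈ A → x ∈ A)
    (x : V) (hx : ∀ a ∈ A, ∃ n : ℤ, B x a = (n : ℚ)) :
    ∃ l ∈ L, ∀ a ∈ A, B l a = B x a := by
  classical
  clear hsymm
  haveI : Module.Finite ℤ ↥L := Module.Finite.iff_fg.mpr hLfg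
  set A' : Submodule ℤ ↥L := A.comap L.subtype with hA'
  have hfex : ∀ m : ↥A', ∃ n : ℤ, B x ((m : ↥L) : V) = (n : ℚ) := fun m => hx _ m.2
  set f0 : ↥A' → ℤ := fun m => (hfex m).choose with hf0def
  have hf0 : ∀ m : ↥A', B x ((m : ↥L) : V) = (f0 m : ℚ) := fun m => (hfex m).choose_spec
  have hf0add : ∀ m₁ m₂, f0 (m₁ + m₂) = f0 m₁ + f0 m₂ := by
    intro m₁ m₂
    have h : ((f0 (m₁ + m₂) : ℚ)) = ((f0 m₁ + f0 m₂ : ℤ) : ℚ) := by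
      rw [← hf0]
      push_cast
      rw [← hf0, ← hf0]
      simp [map_add]
    exact_mod_cast h
  set fl : ↥A' →ₗ[ℤ] ℤ := (AddMonoidHom.mk' f0 hf0add).toIntLinearMap with hfl
  haveI : NoZeroSMulDivisors ℤ (↥L ⧸ A') := by
    refine ⟨fun {c z} h => ?_⟩
    by_cases hc : c = 0
    · exact Or.inl hc
    · right
      obtain ⟨l, rfl⟩ := A'.mkQ_surjective z
      rw [← map_smul, Submodule.mkQ_apply, Submodule.Quotient.mk_eq_zero] at h
      rw [Submodule.mkQ_apply, Submodule.Quotient.mk_eq_zero]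
      have : c • (l : V) ∈ A := h
      exact hAprim (l : V) l.2 c hc this
  obtain ⟨s, hs⟩ := Module.projective_lifting_property A'.mkQ LinearMap.id
    (Submodule.mkQ_surjective A')
  set pr1 : ↥L →ₗ[ℤ] ↥L := (LinearMap.id : ↥L →ₗ[ℤ] ↥L) - s.comp A'.mkQ with hpr1
  have hsec : ∀ l : ↥L, pr1 l ∈ A' := by
    intro l
    have : A'.mkQ (pr1 l) = 0 := by
      rw [hpr1]
      simp only [map_sub, LinearMap.sub_apply, LinearMap.id_apply, LinearMap.comp_apply]
      have := LinearMap.congr_fun hs (A'.mkQ l)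
      simp only [LinearMap.comp_apply, LinearMap.id_apply] at this
      rw [this, sub_self]
    rwa [Submodule.mkQ_apply, Submodule.Quotient.mk_eq_zero] at this
  set proj : ↥L →ₗ[ℤ] ↥A' := LinearMap.codRestrict A' pr1 hsec
    with hproj
  set g : ↥L →ₗ[ℤ] ℤ := fl.comp proj with hgdef
  have hprojA : ∀ (m : ↥L) (hm : m ∈ A'), proj m = ⟨m, hm⟩ := by
    intro m hm
    apply Subtype.ext
    show pr1 m = m
    rw [hpr1]
    simp only [LinearMap.sub_apply, LinearMap.id_apply, LinearMap.comp_apply]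
    have : A'.mkQ m = 0 := by rw [Submodule.mkQ_apply, Submodule.Quotient.mk_eq_zero]; exact hm
    rw [this, map_zero, sub_zero]
  have hg : ∀ (m : ↥L) (hm : m ∈ A'), (g m : ℚ) = B x (m : V) := by
    intro m hm
    rw [hgdef]
    simp only [LinearMap.comp_apply]
    rw [hprojA m hm]
    exact (hf0 ⟨m, hm⟩).symm
  haveI : Module.IsTorsionFree ℤ ↥L := by
    rw [Module.isTorsionFree_iff_smul_eq_zero]
    intro c x h
    by_contra! hc
    refine hc.2 (Subtype.ext ?_)
    have h' : c • (x : V) = 0 := congrArg Subtype.val h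
    rw [← Int.cast_smul_eq_zsmul ℚ] at h'
    exact (smul_eq_zero.mp h').resolve_left (by exact_mod_cast hc.1)
  set b := Module.Free.chooseBasis ℤ ↥L with hb
  have hli : LinearIndependent ℚ (fun i => ((b i : ↥L) : V)) := by
    rw [← LinearIndependent.iff_fractionRing ℤ ℚ]
    exact b.linearIndependent.map' L.subtype (Submodule.ker_subtype L)
  have hsp : ⊤ ≤ Submodule.span ℚ (Set.range fun i => ((b i : ↥L) : V)) := by
    rw [← hLspan, Submodule.span_le]
    intro v hv
    have h1 : Submodule.map L.subtype (Submodule.span ℤ (Set.range ⇑b)) = L := by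
      rw [Module.Basis.span_eq, Submodule.map_top, Submodule.range_subtype]
    have h2 : v ∈ Submodule.map L.subtype (Submodule.span ℤ (Set.range ⇑b)) := h1.symm ▸ hv
    rw [Submodule.map_span] at h2
    have h3 : (L.subtype '' Set.range ⇑b) = Set.range (fun i => ((b i : ↥L) : V)) := by
      rw [← Set.range_comp]; rfl
    rw [h3] at h2
    have h4 : Submodule.span ℤ (Set.range fun i => ((b i : ↥L) : V)) ≤
        Submodule.restrictScalars ℤ (Submodule.span ℚ (Set.range fun i => ((b i : ↥L) : V))) := by
      rw [Submodule.span_le]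
      exact Submodule.subset_span
    exact h4 h2
  set bV : Module.Basis _ ℚ V := Module.Basis.mk hli hsp with hbV
  set G : V →ₗ[ℚ] ℚ := bV.constr ℚ (fun i => (g (b i) : ℚ)) with hG
  have hGg : ∀ l : ↥L, G (l : V) = (g l : ℚ) := by
    intro l
    set u1 : ↥L →ₗ[ℤ] ℚ := (G.restrictScalars ℤ).comp L.subtype with hu1
    set u2 : ↥L →ₗ[ℤ] ℚ := (Int.castAddHom ℚ).toIntLinearMap.comp g with hu2
    have h : u1 = u2 := by
      apply b.ext
      intro i
      rw [hu1, hu2]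
      simp only [LinearMap.comp_apply, LinearMap.restrictScalars_apply, Submodule.coe_subtype,
        AddMonoidHom.coe_toIntLinearMap, Int.coe_castAddHom]
      have : ((b i : ↥L) : V) = bV i := by rw [hbV, Module.Basis.mk_apply]
      rw [this, hG, Module.Basis.constr_basis]
    have := LinearMap.congr_fun h l
    simpa [hu1, hu2] using this
  have hnd' : LinearMap.BilinForm.Nondegenerate B := LinearMap.BilinForm.Nondegenerate.ofSeparatingLeft (fun m hm => hnd m hm)
  set l : V := (LinearMap.BilinForm.toDual B hnd').symm G with hl
  have hlB : ∀ v, B l v = G v := fun v => by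
    rw [hl]
    exact LinearMap.BilinForm.apply_toDual_symm_apply (hB := hnd') (f := G) (v := v)
  have hlL : l ∈ L := by
    rw [← hLuni]
    intro a ha
    exact ⟨g ⟨a, ha⟩, by rw [hlB, hGg ⟨a, ha⟩]⟩
  refine ⟨l, hlL, fun a ha => ?_⟩
  rw [hlB, hGg ⟨a, hAL ha⟩, hg ⟨a, hAL ha⟩ ha]

end NikAux

/-- Nikulin's gluing: Let `L` be an even unimodular lattice, `M ⊆ L` a
primitive sublattice and `N = M^⊥` its orthogonal complement in `L`. Then `N` is
primitive in `L` and there is an isomorphism `φ : D_M → D_N` of discriminant groups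
with `q_N(φ(x)) = -q_M(x)` for all `x ∈ D_M`. -/
theorem glue_map_of_primitive_sublattice
    (V : Type*) [AddCommGroup V] [Module ℚ V] [FiniteDimensional ℚ V]
    (B : V →ₗ[ℚ] V →ₗ[ℚ] ℚ)
    (hsymm : ∀ x y, B x y = B y x)
    (hnd : ∀ x : V, (∀ y : V, B x y = 0) → x = 0)
    (L : Submodule ℤ V) (hLfg : L.FG)
    (hLspan : Submodule.span ℚ (L : Set V) = ⊤)
    (hLuni : dualLattice V B L = L)
    (hLeven : ∀ x ∈ L, ∃ n : ℤ, B x x = 2 * (n : ℚ))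
    (M : Submodule ℤ V) (hML : M ≤ L)
    (hMprim : ∀ x ∈ L, ∀ c : ℤ, c ≠ 0 → c • x ∈ M → x ∈ M)
    (N : Submodule ℤ V)
    (hN : N = L ⊓ Submodule.restrictScalars ℤ
      (⨅ m ∈ (M : Set V), LinearMap.ker (B.flip m)))
    (DM DN : Submodule ℤ V)
    (hDM : DM = dualLattice V B M ⊓
      Submodule.restrictScalars ℤ (Submodule.span ℚ (M : Set V)))
    (hDN : DN = dualLattice V B N ⊓
      Submodule.restrictScalars ℤ (Submodule.span ℚ (N : Set V))) :
    (∀ x ∈ L, ∀ c : ℤ, c ≠ 0 → c • x ∈ N → x ∈ N) ∧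
    ∃ φ : (↥DM ⧸ M.comap DM.subtype) ≃+ (↥DN ⧸ N.comap DN.subtype),
      Function.Bijective φ ∧
      ∀ (x : ↥DM) (y : ↥DN),
        φ (Submodule.Quotient.mk x) = Submodule.Quotient.mk y →
          ∃ n : ℤ, B (y : V) (y : V) + B (x : V) (x : V) = 2 * (n : ℚ) := by
  classical
  -- membership in N
  have hNmem : ∀ z : V, z ∈ N ↔ z ∈ L ∧ ∀ m ∈ M, B z m = 0 := by
    intro z
    rw [hN]
    simp only [Submodule.mem_inf, Submodule.restrictScalars_mem, Submodule.mem_iInf,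
      LinearMap.mem_ker, LinearMap.flip_apply]
    exact Iff.rfl
  have hNL : N ≤ L := fun z hz => ((hNmem z).mp hz).1
  have hMN0 : ∀ n ∈ N, ∀ m ∈ M, B n m = 0 := fun n hn => ((hNmem n).mp hn).2
  -- part 1: primitivity of N
  have hNprim : ∀ x ∈ L, ∀ c : ℤ, c ≠ 0 → c • x ∈ N → x ∈ N := by
    intro x hxL c hc hcx
    rw [hNmem] at hcx ⊢
    refine ⟨hxL, fun m hm => ?_⟩
    have h2 : (c : ℚ) * B x m = 0 := by
      have := hcx.2 m hm
      rwa [map_zsmul, LinearMap.smul_apply, zsmul_eq_mul] at this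
    exact (mul_eq_zero.mp h2).resolve_left (by exact_mod_cast hc)
  refine ⟨hNprim, ?_⟩
  -- orthogonality on spans
  have hperp_span : ∀ (A : Submodule ℤ V) (z : V), (∀ a ∈ A, B z a = 0) →
      ∀ v ∈ Submodule.span ℚ (A : Set V), B z v = 0 := by
    intro A z hz v hv
    induction hv using Submodule.span_induction with
    | mem a ha => exact hz a ha
    | zero => simp
    | add a b _ _ ha hb => rw [map_add, ha, hb, add_zero]
    | smul q a _ ha => rw [map_smul, ha, smul_zero]
  have hNspanM : ∀ n ∈ N, ∀ u ∈ Submodule.span ℚ (M : Set V), B n u = 0 := fun n hn =>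
    hperp_span M n (fun m hm => hMN0 n hn m hm)
  have hMNperp : ∀ u ∈ Submodule.span ℚ (M : Set V), ∀ v ∈ Submodule.span ℚ (N : Set V),
      B u v = 0 := by
    intro u hu v hv
    exact hperp_span N u (fun n hn => by rw [hsymm]; exact hNspanM n hn u hu) v hv
  have hnd' : LinearMap.BilinForm.Nondegenerate B := LinearMap.BilinForm.Nondegenerate.ofSeparatingLeft (fun m hm => hnd m hm)
  have hrefl : LinearMap.IsRefl B := fun x y h => by rw [hsymm]; exact h
  -- span N is the orthogonal complement of span M, and conversely
  have hWeq : Submodule.span ℚ (N : Set V) =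
      LinearMap.BilinForm.orthogonal B (Submodule.span ℚ (M : Set V)) := by
    apply le_antisymm
    · rw [Submodule.span_le]
      intro n hn
      rw [SetLike.mem_coe, LinearMap.BilinForm.mem_orthogonal_iff]
      intro u hu
      show B u n = 0
      rw [hsymm]
      exact hNspanM n hn u hu
    · intro v hv
      rw [LinearMap.BilinForm.mem_orthogonal_iff] at hv
      obtain ⟨c, hc, hcv⟩ := nik_clear_denom L v (by rw [hLspan]; trivial)
      have hcvN : c • v ∈ N := by
        rw [hNmem]
        refine ⟨hcv, fun m hm => ?_⟩
        have h0 : B v m = 0 := by rw [hsymm]; exact hv m (Submodule.subset_span hm)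
        rw [map_zsmul, LinearMap.smul_apply, h0, smul_zero]
      have hv2 : v = ((c : ℚ))⁻¹ • ((c : ℤ) • v) := by
        rw [← Int.cast_smul_eq_zsmul ℚ, smul_smul, inv_mul_cancel₀ (by exact_mod_cast hc),
          one_smul]
      rw [hv2]
      exact Submodule.smul_mem _ _ (Submodule.subset_span hcvN)
  have hMeq : Submodule.span ℚ (M : Set V) =
      LinearMap.BilinForm.orthogonal B (Submodule.span ℚ (N : Set V)) := by
    rw [hWeq, LinearMap.BilinForm.orthogonal_orthogonal hnd' hrefl]
  -- double perp criteria
  have hperpM_spanN : ∀ z : V, (∀ m ∈ M, B z m = 0) → z ∈ Submodule.span ℚ (N : Set V) := by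
    intro z hz
    rw [hWeq, LinearMap.BilinForm.mem_orthogonal_iff]
    intro u hu
    show B u z = 0
    rw [hsymm]
    exact hperp_span M z hz u hu
  have hperpN_spanM : ∀ z : V, (∀ n ∈ N, B z n = 0) → z ∈ Submodule.span ℚ (M : Set V) := by
    intro z hz
    rw [hMeq, LinearMap.BilinForm.mem_orthogonal_iff]
    intro u hu
    show B u z = 0
    rw [hsymm]
    exact hperp_span N z hz u hu
  -- membership criterion for M
  have hMmem : ∀ z : V, z ∈ L → (∀ n ∈ N, B z n = 0) → z ∈ M := by
    intro z hzL hz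
    obtain ⟨c, hc, hcz⟩ := nik_clear_denom M z (hperpN_spanM z hz)
    exact hMprim z hzL c hc hcz
  -- DM and DN membership
  have hDMmem : ∀ z : V, z ∈ DM ↔ (∀ m ∈ M, ∃ n : ℤ, B z m = (n : ℚ)) ∧
      z ∈ Submodule.span ℚ (M : Set V) := by
    intro z
    rw [hDM]
    simp only [Submodule.mem_inf, Submodule.restrictScalars_mem, nik_mem_dualLattice]
  have hDNmem : ∀ z : V, z ∈ DN ↔ (∀ a ∈ N, ∃ n : ℤ, B z a = (n : ℚ)) ∧
      z ∈ Submodule.span ℚ (N : Set V) := by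
    intro z
    rw [hDN]
    simp only [Submodule.mem_inf, Submodule.restrictScalars_mem, nik_mem_dualLattice]
  -- glue partners exist
  have hglueM : ∀ z : V, z ∈ DM → ∃ w : V, w ∈ DN ∧ z + w ∈ L := by
    intro z hz
    rw [hDMmem] at hz
    obtain ⟨l, hlL, hl⟩ := nik_exists_lift B hsymm hnd L hLfg hLspan hLuni M hML hMprim z hz.1
    have hldual : l ∈ dualLattice V B L := by rw [hLuni]; exact hlL
    refine ⟨l - z, ?_, by simpa using hlL⟩
    rw [hDNmem]
    constructor
    · intro n hn
      obtain ⟨k, hk⟩ := hldual n (hNL hn)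
      refine ⟨k, ?_⟩
      have hzn : B z n = 0 := by
        rw [hsymm]; exact hNspanM n hn z hz.2
      rw [map_sub, LinearMap.sub_apply, hzn, sub_zero, hk]
    · apply hperpM_spanN
      intro m hm
      rw [map_sub, LinearMap.sub_apply, hl m hm, sub_self]
  have hglueN : ∀ w : V, w ∈ DN → ∃ z : V, z ∈ DM ∧ w + z ∈ L := by
    intro w hw
    rw [hDNmem] at hw
    obtain ⟨l, hlL, hl⟩ := nik_exists_lift B hsymm hnd L hLfg hLspan hLuni N hNL hNprim w hw.1
    have hldual : l ∈ dualLattice V B L := by rw [hLuni]; exact hlL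
    refine ⟨l - w, ?_, by simpa using hlL⟩
    rw [hDMmem]
    constructor
    · intro m hm
      obtain ⟨k, hk⟩ := hldual m (hML hm)
      refine ⟨k, ?_⟩
      have hwm : B w m = 0 := by
        rw [hsymm]
        exact hMNperp m (Submodule.subset_span hm) w hw.2
      rw [map_sub, LinearMap.sub_apply, hwm, sub_zero, hk]
    · apply hperpN_spanM
      intro n hn
      rw [map_sub, LinearMap.sub_apply, hl n hn, sub_self]
  -- difference lemmas
  have hdiff : ∀ z z' w w' : V, w ∈ Submodule.span ℚ (N : Set V) →
      w' ∈ Submodule.span ℚ (N : Set V) → z + w ∈ L → z' + w' ∈ L → z - z' ∈ M →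
      w - w' ∈ N := by
    intro z z' w w' hw hw' h1 h2 hzz
    rw [hNmem]
    have h : w - w' = (z + w) - (z' + w') - (z - z') := by abel
    constructor
    · rw [h]
      exact Submodule.sub_mem _ (Submodule.sub_mem _ h1 h2) (hML hzz)
    · intro m hm
      have hwm : B w m = 0 := by
        rw [hsymm]; exact hMNperp m (Submodule.subset_span hm) w hw
      have hwm' : B w' m = 0 := by
        rw [hsymm]; exact hMNperp m (Submodule.subset_span hm) w' hw'
      rw [map_sub, LinearMap.sub_apply, hwm, hwm', sub_self]
  have hdiffN : ∀ w w' z z' : V, z ∈ Submodule.span ℚ (M : Set V) →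
      z' ∈ Submodule.span ℚ (M : Set V) → w + z ∈ L → w' + z' ∈ L → w - w' ∈ N →
      z - z' ∈ M := by
    intro w w' z z' hz hz' h1 h2 hww
    have h : z - z' = (w + z) - (w' + z') - (w - w') := by abel
    apply hMmem
    · rw [h]
      exact Submodule.sub_mem _ (Submodule.sub_mem _ h1 h2) (hNL hww)
    · intro n hn
      have hzn : B z n = 0 := hMNperp z hz n (Submodule.subset_span hn)
      have hzn' : B z' n = 0 := hMNperp z' hz' n (Submodule.subset_span hn)
      rw [map_sub, LinearMap.sub_apply, hzn, hzn', sub_self]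
  -- span membership of DM/DN elements
  have hDMspan : ∀ x : ↥DM, (x : V) ∈ Submodule.span ℚ (M : Set V) :=
    fun x => ((hDMmem x).mp x.2).2
  have hDNspan : ∀ y : ↥DN, (y : V) ∈ Submodule.span ℚ (N : Set V) :=
    fun y => ((hDNmem y).mp y.2).2
  -- the forward map
  have hex : ∀ x : ↥DM, ∃ w : V, w ∈ DN ∧ (x : V) + w ∈ L := fun x => hglueM x x.2
  set pf : ↥DM → ↥DN := fun x => ⟨(hex x).choose, (hex x).choose_spec.1⟩ with hpf
  have hpfL : ∀ x : ↥DM, (x : V) + (pf x : V) ∈ L := fun x => (hex x).choose_spec.2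
  set F0 : ↥DM → ↥DN ⧸ N.comap DN.subtype := fun x => Submodule.Quotient.mk (pf x) with hF0def
  have hF0 : ∀ (x : ↥DM) (y : ↥DN), (x : V) + (y : V) ∈ L →
      F0 x = Submodule.Quotient.mk y := by
    intro x y hy
    rw [hF0def]
    apply (Submodule.Quotient.eq _).mpr
    rw [Submodule.mem_comap]
    show ((pf x : ↥DN) : V) - (y : V) ∈ N
    exact hdiff (x : V) (x : V) _ _ (hDNspan (pf x)) (hDNspan y) (hpfL x) hy (by simp)
  have hF0add : ∀ x₁ x₂ : ↥DM, F0 (x₁ + x₂) = F0 x₁ + F0 x₂ := by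
    intro x₁ x₂
    have hmem : ((x₁ + x₂ : ↥DM) : V) + ((pf x₁ + pf x₂ : ↥DN) : V) ∈ L := by
      push_cast
      have h : (x₁ : V) + (x₂ : V) + ((pf x₁ : V) + (pf x₂ : V)) =
          ((x₁ : V) + (pf x₁ : V)) + ((x₂ : V) + (pf x₂ : V)) := by abel
      rw [h]
      exact Submodule.add_mem _ (hpfL x₁) (hpfL x₂)
    rw [hF0 (x₁ + x₂) (pf x₁ + pf x₂) hmem, hF0def, Submodule.Quotient.mk_add]
  set F : ↥DM →ₗ[ℤ] (↥DN ⧸ N.comap DN.subtype) :=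
    (AddMonoidHom.mk' F0 hF0add).toIntLinearMap with hF
  have hFapp : ∀ x : ↥DM, F x = F0 x := fun x => rfl
  have hFker : M.comap DM.subtype ≤ LinearMap.ker F := by
    intro x hx
    rw [Submodule.mem_comap] at hx
    rw [LinearMap.mem_ker, hFapp]
    have h0 : ((x : V) + ((0 : ↥DN) : V)) ∈ L := by simpa using hML hx
    rw [hF0 x 0 h0]
    simp
  -- the backward map
  have hexN : ∀ y : ↥DN, ∃ z : V, z ∈ DM ∧ (y : V) + z ∈ L := fun y => hglueN y y.2
  set pg : ↥DN → ↥DM := fun y => ⟨(hexN y).choose, (hexN y).choose_spec.1⟩ with hpg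
  have hpgL : ∀ y : ↥DN, (y : V) + (pg y : V) ∈ L := fun y => (hexN y).choose_spec.2
  set G0 : ↥DN → ↥DM ⧸ M.comap DM.subtype := fun y => Submodule.Quotient.mk (pg y) with hG0def
  have hG0 : ∀ (y : ↥DN) (x : ↥DM), (y : V) + (x : V) ∈ L →
      G0 y = Submodule.Quotient.mk x := by
    intro y x hx
    rw [hG0def]
    apply (Submodule.Quotient.eq _).mpr
    rw [Submodule.mem_comap]
    show ((pg y : ↥DM) : V) - (x : V) ∈ M
    exact hdiffN (y : V) (y : V) _ _ (hDMspan (pg y)) (hDMspan x) (hpgL y) hx (by simp)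
  have hG0add : ∀ y₁ y₂ : ↥DN, G0 (y₁ + y₂) = G0 y₁ + G0 y₂ := by
    intro y₁ y₂
    have hmem : ((y₁ + y₂ : ↥DN) : V) + ((pg y₁ + pg y₂ : ↥DM) : V) ∈ L := by
      push_cast
      have h : (y₁ : V) + (y₂ : V) + ((pg y₁ : V) + (pg y₂ : V)) =
          ((y₁ : V) + (pg y₁ : V)) + ((y₂ : V) + (pg y₂ : V)) := by abel
      rw [h]
      exact Submodule.add_mem _ (hpgL y₁) (hpgL y₂)
    rw [hG0 (y₁ + y₂) (pg y₁ + pg y₂) hmem, hG0def, Submodule.Quotient.mk_add]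
  set G : ↥DN →ₗ[ℤ] (↥DM ⧸ M.comap DM.subtype) :=
    (AddMonoidHom.mk' G0 hG0add).toIntLinearMap with hG
  have hGapp : ∀ y : ↥DN, G y = G0 y := fun y => rfl
  have hGker : N.comap DN.subtype ≤ LinearMap.ker G := by
    intro y hy
    rw [Submodule.mem_comap] at hy
    rw [LinearMap.mem_ker, hGapp]
    have h0 : ((y : V) + ((0 : ↥DM) : V)) ∈ L := by simpa using hNL hy
    rw [hG0 y 0 h0]
    simp
  -- induced maps on quotients
  set φhat := Submodule.liftQ (M.comap DM.subtype) F hFker with hφhat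
  set ψhat := Submodule.liftQ (N.comap DN.subtype) G hGker with hψhat
  have hφmk : ∀ x : ↥DM, φhat (Submodule.Quotient.mk x) = F0 x := by
    intro x
    rw [hφhat, Submodule.liftQ_apply, hFapp]
  have hψmk : ∀ y : ↥DN, ψhat (Submodule.Quotient.mk y) = G0 y := by
    intro y
    rw [hψhat, Submodule.liftQ_apply, hGapp]
  have hinv1 : ψhat.comp φhat = LinearMap.id := by
    apply Submodule.linearMap_qext
    apply LinearMap.ext
    intro x
    simp only [LinearMap.comp_apply, Submodule.mkQ_apply, LinearMap.id_apply]
    rw [hφmk x, hF0def]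
    rw [hψmk (pf x)]
    apply hG0 (pf x) x
    have h : ((pf x : ↥DN) : V) + (x : V) = (x : V) + ((pf x : ↥DN) : V) := by abel
    rw [h]
    exact hpfL x
  have hinv2 : φhat.comp ψhat = LinearMap.id := by
    apply Submodule.linearMap_qext
    apply LinearMap.ext
    intro y
    simp only [LinearMap.comp_apply, Submodule.mkQ_apply, LinearMap.id_apply]
    rw [hψmk y, hG0def]
    rw [hφmk (pg y)]
    apply hF0 (pg y) y
    have h : ((pg y : ↥DM) : V) + (y : V) = (y : V) + ((pg y : ↥DM) : V) := by abel
    rw [h]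
    exact hpgL y
  set e := LinearEquiv.ofLinear φhat ψhat hinv2 hinv1 with he
  refine ⟨e.toAddEquiv, e.toAddEquiv.bijective, ?_⟩
  intro x y hxy
  -- identify the image
  have hφx : e.toAddEquiv (Submodule.Quotient.mk x) =
      Submodule.Quotient.mk (pf x) := by
    show e (Submodule.Quotient.mk x) = _
    rw [he, LinearEquiv.ofLinear_apply, hφmk x, hF0def]
  rw [hφx] at hxy
  have hd : ((y : V) - (pf x : V)) ∈ N := by
    have h1 := (Submodule.Quotient.eq _).mp hxy
    rw [Submodule.mem_comap] at h1
    have h2 : ((pf x : V) - (y : V)) ∈ N := h1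
    have h3 := N.neg_mem h2
    simpa using h3
  set w : V := (pf x : V) with hw
  set d : V := (y : V) - w with hdd
  have hyd : (y : V) = w + d := by rw [hdd]; abel
  set l : V := (x : V) + w with hldef
  have hlL : l ∈ L := hpfL x
  obtain ⟨k, hk⟩ := hLeven l hlL
  obtain ⟨a, ha⟩ := ((hDNmem w).mp (pf x).2).1 d hd
  obtain ⟨bq, hb⟩ := hLeven d (hNL hd)
  refine ⟨k + a + bq, ?_⟩
  have hxw : B (x : V) w = 0 :=
    hMNperp (x : V) (hDMspan x) w (hDNspan (pf x))
  have hwx : B w (x : V) = 0 := by rw [hsymm]; exact hxw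
  have hdw : B d w = B w d := hsymm d w
  have hll : B l l = B (x : V) (x : V) + B w w := by
    rw [hldef]
    simp only [map_add, LinearMap.add_apply]
    rw [hxw, hwx]
    ring
  have hyy : B (y : V) (y : V) = B w w + 2 * B w d + B d d := by
    rw [hyd]
    simp only [map_add, LinearMap.add_apply]
    rw [hdw]
    ring
  rw [hyy, ha, hb]
  have h2 : B w w + B (x : V) (x : V) = 2 * (k : ℚ) := by
    rw [add_comm, ← hll]; exact hk
  push_cast
  linarith [h2]
end

section
/- Let L be an even unimodular lattice, M ⊆ L a primitive sublattice with orthogonal complement N, and φ: D_M → D_N the associated glue map. Given isometries f ∈ O(M) and g ∈ O(N), the isometry f ⊕ g of M ⊕ N extends to an isometry of L if and only if φ ∘ f̄ = ḡ ∘ φ, where f̄ ∈ O(q_M) and ḡ ∈ O(q_N) are the induced actions on the discriminant groups. -/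
/-- Let `L` be an even unimodular lattice, `M ⊆ L` primitive with
orthogonal complement `N`, and let `f ∈ O(M)`, `g ∈ O(N)` be isometries, combined to
the rational isometry `F = f ⊕ g`. Then `F` extends to an isometry of `L` (maps `L`
into itself) if and only if the induced actions on the discriminant groups commute
with the glue map `φ`, i.e. `φ ∘ f̄ = ḡ ∘ φ`: whenever `x ∈ M^∨`, `y ∈ N^∨` glue to an
element `x + y ∈ L`, then `f(x) + g(y) ∈ L`. -/
theorem isometry_extends_iff_glue_condition
    (V : Type*) [AddCommGroup V] [Module ℚ V] [FiniteDimensional ℚ V]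
    (B : V →ₗ[ℚ] V →ₗ[ℚ] ℚ)
    (hsymm : ∀ x y, B x y = B y x)
    (hnd : ∀ x : V, (∀ y : V, B x y = 0) → x = 0)
    (L : Submodule ℤ V) (hLfg : L.FG)
    (hLspan : Submodule.span ℚ (L : Set V) = ⊤)
    (hLuni : dualLattice V B L = L)
    (hLeven : ∀ x ∈ L, ∃ n : ℤ, B x x = 2 * (n : ℚ))
    (M N : Submodule ℤ V) (hML : M ≤ L) (hNL : N ≤ L)
    (hMprim : ∀ x ∈ L, ∀ c : ℤ, c ≠ 0 → c • x ∈ M → x ∈ M)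
    (hN : N = L ⊓ Submodule.restrictScalars ℤ
      (⨅ m ∈ (M : Set V), LinearMap.ker (B.flip m)))
    (hspan : Submodule.span ℚ (M : Set V) ⊔ Submodule.span ℚ (N : Set V) = ⊤)
    (f g F : V ≃ₗ[ℚ] V)
    (hfiso : ∀ x y, B (f x) (f y) = B x y)
    (hgiso : ∀ x y, B (g x) (g y) = B x y)
    (hfM : ∀ x ∈ M, f x ∈ M) (hfM' : ∀ x ∈ M, f.symm x ∈ M)
    (hgN : ∀ x ∈ N, g x ∈ N) (hgN' : ∀ x ∈ N, g.symm x ∈ N)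
    (hFf : ∀ x ∈ Submodule.span ℚ (M : Set V), F x = f x)
    (hFg : ∀ x ∈ Submodule.span ℚ (N : Set V), F x = g x) :
    (∀ x ∈ L, F x ∈ L) ↔
      (∀ x y : V, x ∈ dualLattice V B M → x ∈ Submodule.span ℚ (M : Set V) →
        y ∈ dualLattice V B N → y ∈ Submodule.span ℚ (N : Set V) →
        x + y ∈ L → f x + g y ∈ L) := by
  constructor
  · intro hF x y hxM hxs hyN hys hxy
    have h := hF _ hxy
    rwa [map_add, hFf x hxs, hFg y hys] at h
  · intro hglue z hz
    have horthN : ∀ n ∈ N, ∀ m ∈ M, B n m = 0 := by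
      intro n hn m hm
      rw [hN] at hn
      have h2 := (Submodule.mem_inf.mp hn).2
      simp only [Submodule.restrictScalars_mem, Submodule.mem_iInf,
        LinearMap.mem_ker, LinearMap.flip_apply] at h2
      exact h2 m hm
    have horth : ∀ x ∈ Submodule.span ℚ (M : Set V),
        ∀ y ∈ Submodule.span ℚ (N : Set V), B x y = 0 := by
      intro x hx
      induction hx using Submodule.span_induction with
      | mem m hm =>
        intro y hy
        induction hy using Submodule.span_induction with
        | mem n hn => rw [hsymm]; exact horthN n hn m hm
        | zero => simp
        | add a b _ _ ha hb => rw [map_add, ha, hb, add_zero]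
        | smul c a _ ha => rw [map_smul, ha, smul_zero]
      | zero => intro y hy; simp
      | add a b _ _ ha hb =>
        intro y hy
        rw [map_add, LinearMap.add_apply, ha y hy, hb y hy, add_zero]
      | smul c a _ ha =>
        intro y hy
        rw [map_smul, LinearMap.smul_apply, ha y hy, smul_zero]
    have hztop : z ∈ Submodule.span ℚ (M : Set V) ⊔ Submodule.span ℚ (N : Set V) := by
      rw [hspan]; trivial
    obtain ⟨x, hx, y, hy, hz'⟩ := Submodule.mem_sup.mp hztop
    subst hz'
    have hzdual : x + y ∈ dualLattice V B L := by rw [hLuni]; exact hz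
    have hxdual : x ∈ dualLattice V B M := by
      intro m hm
      obtain ⟨k, hk⟩ := hzdual m (hML hm)
      refine ⟨k, ?_⟩
      rw [map_add, LinearMap.add_apply] at hk
      have h0 : B y m = 0 := by
        rw [hsymm]; exact horth m (Submodule.subset_span hm) y hy
      rw [h0, add_zero] at hk
      exact hk
    have hydual : y ∈ dualLattice V B N := by
      intro n hn
      obtain ⟨k, hk⟩ := hzdual n (hNL hn)
      refine ⟨k, ?_⟩
      rw [map_add, LinearMap.add_apply] at hk
      have h0 : B x n = 0 := horth x hx n (Submodule.subset_span hn)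
      rw [h0, zero_add] at hk
      exact hk
    have hfin := hglue x y hxdual hx hydual hy hz
    rwa [map_add, hFf x hx, hFg y hy]
end
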